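/- arXiv:1101.3920 — 2 statements merged into one kernel-verified Lean document; each statement's English description precedes it below -/
import Mathlib

section
/- Let V : ℝ^N → ℝ be twice continuously differentiable and let x : ℝ → ℝ^N be a twice continuously differentiable solution of ẍ(s) = D²V(x(s)) ∇V(x(s)) with ẋ ∈ L²(ℝ;ℝ^N) and x(t) → x^± as t → ±∞, where ∇V(x^±) = 0. Then J(x) = ∫_ℝ |∇V(x(s))|² ds. -/
open MeasureTheory Filter Topology

noncomputable section

/-- Euclidean space `ℝ^N`. -/
abbrev Euc (N : ℕ) := EuclideanSpace ℝ (Fin N)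

/-- The set of critical points of the potential `V`. -/
def critSet {N : ℕ} (V : Euc N → ℝ) : Set (Euc N) := {x | gradient V x = 0}

/-- The Hessian `D²V(x)` of `V` at `x`, as the Fréchet derivative of the gradient. -/
def hess {N : ℕ} (V : Euc N → ℝ) (x : Euc N) : Euc N →L[ℝ] Euc N := fderiv ℝ (gradient V) x

/-- The Laplacian `ΔV(x)`, i.e. the trace of the Hessian. -/
def lapl {N : ℕ} (V : Euc N → ℝ) (x : Euc N) : ℝ :=
  LinearMap.trace ℝ (Euc N) (hess V x : Euc N →ₗ[ℝ] Euc N)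

/-- The energy `J(y) = ∫_ℝ (½|ẏ|² + ½|∇V(y)|²) ds` of a path `y` with derivative `y'`. -/
def energy {N : ℕ} (V : Euc N → ℝ) (y y' : ℝ → Euc N) : ℝ :=
  ∫ s, ((1:ℝ)/2 * ‖y' s‖^2 + 1/2 * ‖gradient V (y s)‖^2)

/-- `y ∈ X(xm, xp)`: a locally absolutely continuous path of bounded variation with
derivative `y'` in `L²(ℝ)` and limits `xm`/`xp` at `∓∞`. -/
structure IsTransitionPath {N : ℕ} (V : Euc N → ℝ) (xm xp : Euc N) (y y' : ℝ → Euc N) : Prop where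
  ac : ∀ t, y t = y 0 + ∫ s in (0:ℝ)..t, y' s
  memL2 : MemLp y' 2 (volume : Measure ℝ)
  bv : BoundedVariationOn y Set.univ
  tendsto_bot : Tendsto y atBot (𝓝 xm)
  tendsto_top : Tendsto y atTop (𝓝 xp)

/-- The transition energy `Φ(xm,xp) = inf {J(y) | y ∈ X(xm,xp)}`. -/
def Phi {N : ℕ} (V : Euc N → ℝ) (xm xp : Euc N) : ℝ :=
  sInf {r | ∃ y y', IsTransitionPath V xm xp y y' ∧ r = energy V y y'}

/-- `V` is admissible: `C³`, finitely many critical points, nondegenerate Hessian at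
every critical point, and weakly coercive. -/
def Admissible {N : ℕ} (V : Euc N → ℝ) : Prop :=
  ContDiff ℝ 3 V ∧ (critSet V).Finite ∧
  (∀ x ∈ critSet V, ∀ v : Euc N, hess V x v = 0 → v = 0) ∧
  ∃ R > 0, ∃ c > 0, ∀ x : Euc N, R < ‖x‖ → c ≤ ‖gradient V x‖

/-!
Differentiating, `|ẋ|² - |∇V(x)|²` has derivative `2⟪ẋ, D²V(x)∇V(x)⟫ - 2⟪∇V(x), D²V(x)ẋ⟫ = 0`
by symmetry of the Hessian, so it is constant along the orbit. Since `ẋ ∈ L²`, `|ẋ|` is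
arbitrarily small at arbitrarily late times, while `∇V(x(t)) → ∇V(x⁺) = 0`; hence the constant
is `0` and the two halves of the energy density coincide pointwise.
-/

open RealInnerProductSpace InnerProductSpace

section Gradient

variable {F : Type*} [NormedAddCommGroup F] [InnerProductSpace ℝ F] [CompleteSpace F]
  {f : F → ℝ}

theorem ContDiff.gradient {m n : WithTop ℕ∞} (hf : ContDiff ℝ n f) (hmn : m + 1 ≤ n) :
    ContDiff ℝ m (gradient f) :=
  (toDual ℝ F).symm.contDiff.comp (hf.fderiv_right hmn)

theorem inner_fderiv_gradient_apply (y u v : F) :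
    ⟪fderiv ℝ (gradient f) y u, v⟫ = fderiv ℝ (fderiv ℝ f) y u v := by
  have : gradient f = (toDual ℝ F).symm ∘ fderiv ℝ f := rfl
  rw [this, LinearIsometryEquiv.comp_fderiv]
  exact toDual_symm_apply

theorem inner_fderiv_gradient_comm {y : F} (hf : ContDiffAt ℝ 2 f y) (u v : F) :
    ⟪fderiv ℝ (gradient f) y u, v⟫ = ⟪fderiv ℝ (gradient f) y v, u⟫ := by
  rw [inner_fderiv_gradient_apply, inner_fderiv_gradient_apply]
  exact hf.isSymmSndFDerivAt (by simp [minSmoothness_of_isRCLikeNormedField]) u v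

end Gradient

theorem frequently_norm_lt_of_memLp {E : Type*} [NormedAddCommGroup E] {f : ℝ → E}
    {p : ENNReal} (hf : MemLp f p volume) (hp0 : p ≠ 0) (hptop : p ≠ ⊤) {ε : ℝ} (hε : 0 < ε) :
    ∃ᶠ s in atTop, ‖f s‖ < ε := by
  intro hge
  obtain ⟨T, hT⟩ := eventually_atTop.1 hge
  have hsub : Set.Ici T ⊆ {s | ε.toNNReal ≤ ‖f s‖₊} := fun s hs => by
    simpa [← NNReal.coe_le_coe, hε.le] using hT s hs
  have hfin := hf.meas_ge_lt_top hp0 hptop (ε := ε.toNNReal) (by simpa using hε)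
  simpa [Real.volume_Ici] using (measure_mono hsub).trans_lt hfin

section Conservation

variable {F : Type*} [NormedAddCommGroup F] [InnerProductSpace ℝ F] [CompleteSpace F]
  {V : F → ℝ} {x x' x'' : ℝ → F} {s : ℝ}

theorem hasDerivAt_norm_sq_deriv_sub_norm_sq_gradient (hV : ContDiff ℝ 2 V)
    (hx : HasDerivAt x (x' s) s) (hx' : HasDerivAt x' (x'' s) s)
    (heq : x'' s = fderiv ℝ (gradient V) (x s) (gradient V (x s))) :
    HasDerivAt (fun t => ‖x' t‖ ^ 2 - ‖gradient V (x t)‖ ^ 2) 0 s := by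
  have hgrad : HasDerivAt (fun t => gradient V (x t))
      (fderiv ℝ (gradient V) (x s) (x' s)) s :=
    ((hV.gradient (m := 1) le_rfl).differentiable one_ne_zero (x s)).hasFDerivAt.comp_hasDerivAt s hx
  have hzero : 2 * ⟪x' s, x'' s⟫ - 2 * ⟪gradient V (x s), fderiv ℝ (gradient V) (x s) (x' s)⟫ = 0 := by
    rw [heq, real_inner_comm, inner_fderiv_gradient_comm hV.contDiffAt, real_inner_comm, sub_self]
  have h := hx'.norm_sq.sub hgrad.norm_sq
  rw [hzero] at h
  exact h

theorem norm_sq_deriv_sub_norm_sq_gradient_eq (hV : ContDiff ℝ 2 V)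
    (hx : ∀ s, HasDerivAt x (x' s) s) (hx' : ∀ s, HasDerivAt x' (x'' s) s)
    (heq : ∀ s, x'' s = fderiv ℝ (gradient V) (x s) (gradient V (x s))) (s t : ℝ) :
    ‖x' s‖ ^ 2 - ‖gradient V (x s)‖ ^ 2 = ‖x' t‖ ^ 2 - ‖gradient V (x t)‖ ^ 2 :=
  have hderiv t := hasDerivAt_norm_sq_deriv_sub_norm_sq_gradient hV (hx t) (hx' t) (heq t)
  is_const_of_deriv_eq_zero (fun t => (hderiv t).differentiableAt) (fun t => (hderiv t).deriv) s t

end Conservation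

theorem norm_sq_sub_norm_sq_eq_zero_of_memLp {E G : Type*} [NormedAddCommGroup E]
    [NormedAddCommGroup G] {f : ℝ → E} {g : ℝ → G} {p : ENNReal} {c : ℝ}
    (hf : MemLp f p volume) (hp0 : p ≠ 0) (hptop : p ≠ ⊤) (hg : Tendsto g atTop (𝓝 0))
    (hc : ∀ s, ‖f s‖ ^ 2 - ‖g s‖ ^ 2 = c) : c = 0 := by
  refine abs_nonpos_iff.1 (le_of_forall_pos_lt_add fun ε hε => ?_)
  have hδ : 0 < √ε := Real.sqrt_pos.2 hε
  obtain ⟨s, hfs, hgs⟩ := ((frequently_norm_lt_of_memLp hf hp0 hptop hδ).and_eventually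
    (hg.eventually (Metric.ball_mem_nhds 0 hδ))).exists
  rw [dist_zero_right] at hgs
  have hfs2 : ‖f s‖ ^ 2 < ε := (Real.lt_sqrt (norm_nonneg _)).1 hfs
  have hgs2 : ‖g s‖ ^ 2 < ε := (Real.lt_sqrt (norm_nonneg _)).1 hgs
  rw [← hc s, zero_add, abs_sub_lt_iff]
  constructor <;> linarith [sq_nonneg ‖f s‖, sq_nonneg ‖g s‖]

theorem statement4_general {N : ℕ} (V : Euc N → ℝ) (hV : ContDiff ℝ 2 V)
    (x x' x'' : ℝ → Euc N)
    (hx : ∀ s, HasDerivAt x (x' s) s)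
    (hx' : ∀ s, HasDerivAt x' (x'' s) s)
    (heq : ∀ s, x'' s = hess V (x s) (gradient V (x s)))
    (hL2 : MemLp x' 2 (volume : Measure ℝ))
    (xp : Euc N) (hcp : gradient V xp = 0)
    (htop : Filter.Tendsto x Filter.atTop (𝓝 xp)) :
    energy V x x' = ∫ s, ‖gradient V (x s)‖^2 := by
  have hconserved (s : ℝ) :=
    norm_sq_deriv_sub_norm_sq_gradient_eq hV hx hx' heq s 0
  have hgrad_top : Tendsto (fun s => gradient V (x s)) atTop (𝓝 0) :=
    hcp ▸ ((hV.gradient (m := 0) (by norm_num)).continuous.tendsto xp).comp htop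
  have hzero := norm_sq_sub_norm_sq_eq_zero_of_memLp hL2 two_ne_zero ENNReal.ofNat_ne_top
    hgrad_top hconserved
  unfold energy
  congr 1 with s
  linarith [hconserved s]

/-- for a heteroclinic orbit of `ẍ = D²V(x)∇V(x)` between critical points,
`J(x) = ∫_ℝ |∇V(x(s))|² ds`. -/
theorem statement4 {N : ℕ} (V : Euc N → ℝ) (hV : ContDiff ℝ 2 V)
    (x x' x'' : ℝ → Euc N)
    (hx : ∀ s, HasDerivAt x (x' s) s)
    (hx' : ∀ s, HasDerivAt x' (x'' s) s)
    (hx''cont : Continuous x'')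
    (heq : ∀ s, x'' s = hess V (x s) (gradient V (x s)))
    (hL2 : MemLp x' 2 (volume : Measure ℝ))
    (xm xp : Euc N) (hcm : gradient V xm = 0) (hcp : gradient V xp = 0)
    (hbot : Filter.Tendsto x Filter.atBot (𝓝 xm))
    (htop : Filter.Tendsto x Filter.atTop (𝓝 xp)) :
    energy V x x' = ∫ s, ‖gradient V (x s)‖^2 :=
  statement4_general V hV x x' x'' hx hx' heq hL2 xp hcp htop
end
end

section
/- Let V : ℝ^N → ℝ be continuously differentiable, let x⁺, y₀ ∈ ℝ^N, and suppose C > 0 is such that |∇V(z)|² ≤ C|z − x⁺|² for every z on the line segment from y₀ to x⁺. Then there exists a locally absolutely continuous path y : [0,∞) → ℝ^N with y(0) = y₀, y(s) = x⁺ for all s ≥ 1, and ½ ∫₀^∞ (|ẏ(s)|² + |∇V(y(s))|²) ds ≤ ½ (1 + C/3) |y₀ − x⁺|². -/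
/-!
Follow the segment from `y₀` to `x⁺` at constant velocity `x⁺ - y₀` during `[0, 1]` and rest
at `x⁺` afterwards. The kinetic part contributes `|y₀ - x⁺|²`. At time `s ∈ (0, 1]` the path
is at distance `(1 - s)|y₀ - x⁺|` from `x⁺`, so the potential part is at most
`C |y₀ - x⁺|² ∫₀¹ (1 - s)² ds = C/3 |y₀ - x⁺|²`. Taking `z = x⁺` in the hypothesis shows that `x⁺`
is critical, so nothing is contributed after time 1.
-/

open MeasureTheory Filter Topology

noncomputable section

open Set

theorem measurable_gradient {F : Type*} [NormedAddCommGroup F] [InnerProductSpace ℝ F]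
    [CompleteSpace F] [MeasurableSpace F] [BorelSpace F] (f : F → ℝ) :
    Measurable (gradient f) :=
  (InnerProductSpace.toDual ℝ F).symm.continuous.measurable.comp (measurable_fderiv ℝ f)

section

variable {E : Type*} [NormedAddCommGroup E] [NormedSpace ℝ E]

def segmentPath (a b : E) (t : ℝ) : E := AffineMap.lineMap a b (min t 1)

variable (a b : E) {t : ℝ}

theorem segmentPath_zero : segmentPath a b 0 = a := by simp [segmentPath]

theorem segmentPath_of_one_le (ht : 1 ≤ t) : segmentPath a b t = b := by
  simp [segmentPath, min_eq_right ht]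

theorem segmentPath_mem_segment (ht : t ∈ Icc (0:ℝ) 1) : segmentPath a b t ∈ segment ℝ a b := by
  rw [segmentPath, min_eq_left ht.2]
  exact lineMap_mem_segment ℝ a b ht

theorem segmentPath_sub_right (ht : t ≤ 1) : segmentPath a b t - b = (1 - t) • (a - b) := by
  rw [segmentPath, min_eq_left ht]
  exact AffineMap.lineMap_vsub_right a b t

theorem continuous_segmentPath : Continuous (segmentPath a b) :=
  (AffineMap.lineMap_continuous).comp (continuous_id.min continuous_const)

theorem intervalIntegral_indicator_Ioc_zero_one [CompleteSpace E] (v : E) (ht : 0 ≤ t) :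
    ∫ s in (0:ℝ)..t, (Ioc 0 1).indicator (fun _ => v) s = min t 1 • v := by
  rw [intervalIntegral.integral_of_le ht, setIntegral_indicator measurableSet_Ioc,
    Ioc_inter_Ioc, setIntegral_const, max_self, Measure.real, Real.volume_Ioc, sub_zero,
    ENNReal.toReal_ofReal (le_min ht zero_le_one)]

theorem segmentPath_eq_add_integral [CompleteSpace E] (ht : 0 ≤ t) :
    segmentPath a b t = a + ∫ s in (0:ℝ)..t, (Ioc 0 1).indicator (fun _ => b - a) s := by
  rw [intervalIntegral_indicator_Ioc_zero_one _ ht, segmentPath, AffineMap.lineMap_apply,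
    vsub_eq_sub, vadd_eq_add, add_comm]

end

theorem integral_Ioc_zero_one_add_mul_one_sub_sq (a c : ℝ) :
    ∫ s in Ioc (0:ℝ) 1, (a + c * (1 - s) ^ 2) = a + c / 3 := by
  rw [← intervalIntegral.integral_of_le zero_le_one, intervalIntegral.integral_add,
    intervalIntegral.integral_const_mul, intervalIntegral.integral_comp_sub_left (fun x => x ^ 2)]
  · simp [integral_pow]; ring
  · exact intervalIntegrable_const
  · exact (by fun_prop : Continuous fun s : ℝ => c * (1 - s) ^ 2).intervalIntegrable _ _

theorem sq_norm_add_sq_norm_gradient_segmentPath_le {F : Type*} [NormedAddCommGroup F]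
    [InnerProductSpace ℝ F] [CompleteSpace F] {V : F → ℝ} {a b : F} {C : ℝ}
    (hseg : ∀ z ∈ segment ℝ a b, ‖gradient V z‖ ^ 2 ≤ C * ‖z - b‖ ^ 2) {s : ℝ} (hs : 0 < s) :
    ‖(Ioc 0 1).indicator (fun _ => b - a) s‖ ^ 2 + ‖gradient V (segmentPath a b s)‖ ^ 2 ≤
      (Ioc 0 1).indicator (fun s => ‖a - b‖ ^ 2 + C * ‖a - b‖ ^ 2 * (1 - s) ^ 2) s := by
  by_cases hs1 : s ≤ 1
  · have hs' : s ∈ Ioc (0:ℝ) 1 := ⟨hs, hs1⟩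
    have hgrad := hseg _ (segmentPath_mem_segment a b ⟨hs.le, hs1⟩)
    rw [segmentPath_sub_right a b hs1, norm_smul, mul_pow, Real.norm_eq_abs, sq_abs] at hgrad
    rw [indicator_of_mem hs', indicator_of_mem hs', norm_sub_rev]
    linarith
  · have hs' : s ∉ Ioc (0:ℝ) 1 := fun h => hs1 h.2
    have hcrit : gradient V b = 0 := by simpa using hseg b (right_mem_segment ℝ a b)
    simp [indicator_of_notMem hs', segmentPath_of_one_le a b (not_le.mp hs1).le, hcrit]

theorem statement17_general {N : ℕ} (V : Euc N → ℝ)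
    (xp y₀ : Euc N) (C : ℝ)
    (hseg : ∀ z ∈ segment ℝ y₀ xp, ‖gradient V z‖^2 ≤ C * ‖z - xp‖^2) :
    ∃ y y' : ℝ → Euc N,
      y 0 = y₀ ∧ (∀ s ≥ (1:ℝ), y s = xp) ∧
      (∀ t ∈ Set.Ici (0:ℝ), y t = y 0 + ∫ s in (0:ℝ)..t, y' s) ∧
      IntegrableOn (fun s => ‖y' s‖^2 + ‖gradient V (y s)‖^2) (Set.Ioi (0:ℝ)) ∧
      (1:ℝ)/2 * (∫ s in Set.Ioi (0:ℝ), (‖y' s‖^2 + ‖gradient V (y s)‖^2))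
        ≤ 1/2 * (1 + C/3) * ‖y₀ - xp‖^2 := by
  set y' : ℝ → Euc N := (Ioc 0 1).indicator (fun _ => xp - y₀)
  set g : ℝ → ℝ := (Ioc 0 1).indicator
    (fun s => ‖y₀ - xp‖ ^ 2 + C * ‖y₀ - xp‖ ^ 2 * (1 - s) ^ 2)
  have hbound : ∀ s ∈ Ioi (0:ℝ),
      ‖y' s‖ ^ 2 + ‖gradient V (segmentPath y₀ xp s)‖ ^ 2 ≤ g s :=
    fun s hs => sq_norm_add_sq_norm_gradient_segmentPath_le hseg hs
  have hg : Integrable g :=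
    (continuous_const.add (by fun_prop)).integrableOn_Ioc.integrable_indicator measurableSet_Ioc
  have hf : IntegrableOn
      (fun s => ‖y' s‖ ^ 2 + ‖gradient V (segmentPath y₀ xp s)‖ ^ 2) (Ioi 0) := by
    refine hg.integrableOn.mono' ?_ (ae_restrict_of_forall_mem measurableSet_Ioi fun s hs => ?_)
    · have hy' : Measurable y' := measurable_const.indicator measurableSet_Ioc
      have hgrad := (measurable_gradient V).comp (continuous_segmentPath y₀ xp).measurable
      exact ((hy'.norm.pow_const 2).add (hgrad.norm.pow_const 2)).aestronglyMeasurable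
    · rw [Real.norm_of_nonneg (by positivity)]
      exact hbound s hs
  refine ⟨segmentPath y₀ xp, y', segmentPath_zero y₀ xp,
    fun s hs => segmentPath_of_one_le y₀ xp hs,
    fun t ht => (segmentPath_zero y₀ xp).symm ▸ segmentPath_eq_add_integral y₀ xp ht, hf, ?_⟩
  calc (1:ℝ)/2 * ∫ s in Ioi 0, (‖y' s‖ ^ 2 + ‖gradient V (segmentPath y₀ xp s)‖ ^ 2)
      ≤ 1/2 * ∫ s in Ioi 0, g s :=
        mul_le_mul_of_nonneg_left
          (setIntegral_mono_on hf hg.integrableOn measurableSet_Ioi hbound) (by norm_num)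
    _ = 1/2 * (1 + C/3) * ‖y₀ - xp‖^2 := by
        rw [setIntegral_indicator measurableSet_Ioc, inter_eq_right.mpr Ioc_subset_Ioi_self,
          integral_Ioc_zero_one_add_mul_one_sub_sq]
        ring

/-- the comparison path: if `|∇V|² ≤ C|·−x⁺|²` on the segment from `y₀`
to `x⁺`, there is an absolutely continuous path from `y₀` reaching `x⁺` at time 1 with
energy at most `½(1 + C/3)|y₀ − x⁺|²`. -/
theorem statement17 {N : ℕ} (V : Euc N → ℝ) (hV : ContDiff ℝ 1 V)
    (xp y₀ : Euc N) (C : ℝ) (hC : 0 < C)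
    (hseg : ∀ z ∈ segment ℝ y₀ xp, ‖gradient V z‖^2 ≤ C * ‖z - xp‖^2) :
    ∃ y y' : ℝ → Euc N,
      y 0 = y₀ ∧ (∀ s ≥ (1:ℝ), y s = xp) ∧
      (∀ t ∈ Set.Ici (0:ℝ), y t = y 0 + ∫ s in (0:ℝ)..t, y' s) ∧
      IntegrableOn (fun s => ‖y' s‖^2 + ‖gradient V (y s)‖^2) (Set.Ioi (0:ℝ)) ∧
      (1:ℝ)/2 * (∫ s in Set.Ioi (0:ℝ), (‖y' s‖^2 + ‖gradient V (y s)‖^2))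
        ≤ 1/2 * (1 + C/3) * ‖y₀ - xp‖^2 :=
  statement17_general V xp y₀ C hseg
end
end
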